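/- In an implicative algebra, the implicative conjunction a × b satisfies the introduction and elimination rules up to the separator: there exist p, p1, p2 ∈ Σ such that p ≤ ⋀_{a,b}(a → (b → a×b)), p1 ≤ ⋀_{a,b}(a×b → a), and p2 ≤ ⋀_{a,b}(a×b → b). -/

import Mathlib

universe u v

/-- An implicative algebra: a complete lattice with an implication antitone in the
first argument, monotone in the second, distributing over arbitrary meets in the
second argument, together with a separator `Sep` which is upward closed, closed
under modus ponens, and contains the combinators K and S. -/
structure ImplicativeAlgebra (A : Type u) [CompleteLattice A] where
  imp : A → A → A
  imp_anti : ∀ ⦃a a' b : A⦄, a ≤ a' → imp a' b ≤ imp a b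
  imp_mono : ∀ ⦃a b b' : A⦄, b ≤ b' → imp a b ≤ imp a b'
  imp_sInf : ∀ (a : A) (S : Set A), imp a (sInf S) = ⨅ b ∈ S, imp a b
  Sep : Set A
  sep_upward : ∀ ⦃a b : A⦄, a ∈ Sep → a ≤ b → b ∈ Sep
  sep_mp : ∀ ⦃a b : A⦄, imp a b ∈ Sep → a ∈ Sep → b ∈ Sep
  sep_K : (⨅ a : A, ⨅ b : A, imp a (imp b a)) ∈ Sep
  sep_S : (⨅ a : A, ⨅ b : A, ⨅ c : A,
      imp (imp a (imp b c)) (imp (imp a b) (imp a c))) ∈ Sep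

namespace ImplicativeAlgebra

variable {A : Type u} [CompleteLattice A] (𝔸 : ImplicativeAlgebra A)

/-- Application: `a · b := ⋀ {x | a ≤ b → x}`. -/
def app (a b : A) : A := sInf {x : A | a ≤ 𝔸.imp b x}

/-- Implicative conjunction `a × b`. -/
def itimes (a b : A) : A := ⨅ x : A, 𝔸.imp (𝔸.imp a (𝔸.imp b x)) x

/-- Implicative disjunction `a + b`. -/
def iplus (a b : A) : A := ⨅ x : A, 𝔸.imp (𝔸.imp a x) (𝔸.imp (𝔸.imp b x) x)

/-- Second-order encoding of the existential quantifier. -/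
def iexists {ι : Sort v} (f : ι → A) : A := ⨅ x : A, 𝔸.imp (⨅ i, 𝔸.imp (f i) x) x

/-- Encoding of k = λx.λy.x. -/
def kComb : A := ⨅ a : A, 𝔸.imp a (⨅ b : A, 𝔸.imp b a)

/-- Encoding of λx.λy.y. -/
def kbarComb : A := ⨅ a : A, 𝔸.imp a (⨅ b : A, 𝔸.imp b b)

/-- Encoding of the pairing combinator p = λx.λy.λz.zxy. -/
def pComb : A := ⨅ a : A, 𝔸.imp a (⨅ b : A, 𝔸.imp b (⨅ c : A, 𝔸.imp c (𝔸.app (𝔸.app c a) b)))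

/-- Encoding of the first projection p₁ = λu.u k. -/
def p1Comb : A := ⨅ u : A, 𝔸.imp u (𝔸.app u 𝔸.kComb)

/-- Encoding of the second projection p₂ = λv.v k̄. -/
def p2Comb : A := ⨅ u : A, 𝔸.imp u (𝔸.app u 𝔸.kbarComb)

/-- Encoding of the existential-introduction combinator e = λx.λz.zx. -/
def eComb : A := ⨅ a : A, 𝔸.imp a (⨅ c : A, 𝔸.imp c (𝔸.app c a))

end ImplicativeAlgebra


/-!
In an implicative algebra application is left adjoint to implication (`s ⬝ a ≤ b ↔ s ≤ a → b`),
so the encoding `⨅ a, a → t a` of a λ-abstraction `λx.t` lies above every `s` with `s ⬝ a ≤ t a`,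
and β-reduction holds up to `≤`. The encodings of `p`, `p₁ = λu.u k`, `p₂ = λv.v k̄` therefore lie
above the combinators `B C (C I)`, `C I k` and `C I k̄`, which are built from `K` and `S` and hence
belong to the separator; and `a × b ≤ (a → b → x) → x` makes them realize the three rules.
-/

namespace ImplicativeAlgebra

variable {A : Type u} [CompleteLattice A] (𝔸 : ImplicativeAlgebra A)

local infixl:100 " ⬝ " => 𝔸.app

theorem app_le_iff {s a b : A} : s ⬝ a ≤ b ↔ s ≤ 𝔸.imp a b := by
  refine ⟨fun h => ?_, fun h => sInf_le h⟩
  have hs : s ≤ 𝔸.imp a (s ⬝ a) := by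
    rw [app, 𝔸.imp_sInf]
    exact le_iInf₂ fun _ hx => hx
  exact hs.trans (𝔸.imp_mono h)

theorem le_iInf_imp_iff {s : A} {f : A → A} :
    s ≤ ⨅ a, 𝔸.imp a (f a) ↔ ∀ a, s ⬝ a ≤ f a := by
  simp only [le_iInf_iff, app_le_iff]

@[gcongr]
theorem app_mono {s s' a a' : A} (hs : s ≤ s') (ha : a ≤ a') : s ⬝ a ≤ s' ⬝ a' :=
  (𝔸.app_le_iff).2 <| hs.trans <| ((𝔸.app_le_iff).1 le_rfl).trans (𝔸.imp_anti ha)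

theorem app_mem_sep {s a : A} (hs : s ∈ 𝔸.Sep) (ha : a ∈ 𝔸.Sep) : s ⬝ a ∈ 𝔸.Sep :=
  𝔸.sep_mp (𝔸.sep_upward hs ((𝔸.app_le_iff).1 le_rfl)) ha

theorem iInf_imp_mem_sep {s : A} {f : A → A} (hs : s ∈ 𝔸.Sep)
    (h : ∀ a, s ⬝ a ≤ f a) : (⨅ a, 𝔸.imp a (f a)) ∈ 𝔸.Sep :=
  𝔸.sep_upward hs ((𝔸.le_iInf_imp_iff).2 h)

theorem kComb_le_imp_imp (a b : A) : 𝔸.kComb ≤ 𝔸.imp a (𝔸.imp b a) :=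
  iInf_le_of_le a (𝔸.imp_mono (iInf_le _ b))

theorem kbarComb_le_imp_imp (a b : A) : 𝔸.kbarComb ≤ 𝔸.imp a (𝔸.imp b b) :=
  iInf_le_of_le a (𝔸.imp_mono (iInf_le _ b))

theorem kComb_app_app_le (a b : A) : 𝔸.kComb ⬝ a ⬝ b ≤ a := by
  rw [app_le_iff, app_le_iff]
  exact 𝔸.kComb_le_imp_imp a b

theorem kComb_mem_sep : 𝔸.kComb ∈ 𝔸.Sep :=
  𝔸.sep_upward 𝔸.sep_K <| (𝔸.le_iInf_imp_iff).2 fun a => (𝔸.le_iInf_imp_iff).2 fun b => by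
    rw [app_le_iff, app_le_iff]
    exact (iInf_le _ a).trans (iInf_le _ b)

def sComb : A := ⨅ a : A, ⨅ b : A, ⨅ c : A,
  𝔸.imp (𝔸.imp a (𝔸.imp b c)) (𝔸.imp (𝔸.imp a b) (𝔸.imp a c))

theorem sComb_mem_sep : 𝔸.sComb ∈ 𝔸.Sep := 𝔸.sep_S

theorem sComb_app_app_app_le (f g a : A) : 𝔸.sComb ⬝ f ⬝ g ⬝ a ≤ f ⬝ a ⬝ (g ⬝ a) := by
  set b := g ⬝ a
  set c := f ⬝ a ⬝ b
  have hf : f ≤ 𝔸.imp a (𝔸.imp b c) := by rw [← app_le_iff, ← app_le_iff]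
  have hg : g ≤ 𝔸.imp a b := (𝔸.app_le_iff).1 le_rfl
  rw [app_le_iff, app_le_iff, app_le_iff]
  exact (iInf_le_of_le a <| iInf_le_of_le b <| iInf_le _ c).trans <|
    (𝔸.imp_anti hf).trans <| 𝔸.imp_mono (𝔸.imp_anti hg)

def iComb : A := 𝔸.sComb ⬝ 𝔸.kComb ⬝ 𝔸.kComb

def bComb : A := 𝔸.sComb ⬝ (𝔸.kComb ⬝ 𝔸.sComb) ⬝ 𝔸.kComb

def cComb : A := 𝔸.sComb ⬝ (𝔸.bComb ⬝ 𝔸.bComb ⬝ 𝔸.sComb) ⬝ (𝔸.kComb ⬝ 𝔸.kComb)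

theorem iComb_mem_sep : 𝔸.iComb ∈ 𝔸.Sep :=
  𝔸.app_mem_sep (𝔸.app_mem_sep 𝔸.sComb_mem_sep 𝔸.kComb_mem_sep) 𝔸.kComb_mem_sep

theorem bComb_mem_sep : 𝔸.bComb ∈ 𝔸.Sep :=
  𝔸.app_mem_sep (𝔸.app_mem_sep 𝔸.sComb_mem_sep (𝔸.app_mem_sep 𝔸.kComb_mem_sep 𝔸.sComb_mem_sep))
    𝔸.kComb_mem_sep

theorem cComb_mem_sep : 𝔸.cComb ∈ 𝔸.Sep :=
  𝔸.app_mem_sep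
    (𝔸.app_mem_sep 𝔸.sComb_mem_sep (𝔸.app_mem_sep (𝔸.app_mem_sep 𝔸.bComb_mem_sep 𝔸.bComb_mem_sep)
      𝔸.sComb_mem_sep))
    (𝔸.app_mem_sep 𝔸.kComb_mem_sep 𝔸.kComb_mem_sep)

theorem iComb_app_le (a : A) : 𝔸.iComb ⬝ a ≤ a :=
  calc 𝔸.iComb ⬝ a ≤ 𝔸.kComb ⬝ a ⬝ (𝔸.kComb ⬝ a) := 𝔸.sComb_app_app_app_le _ _ _
    _ ≤ a := 𝔸.kComb_app_app_le _ _

theorem bComb_app_app_app_le (f g a : A) : 𝔸.bComb ⬝ f ⬝ g ⬝ a ≤ f ⬝ (g ⬝ a) :=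
  calc 𝔸.bComb ⬝ f ⬝ g ⬝ a ≤ 𝔸.kComb ⬝ 𝔸.sComb ⬝ f ⬝ (𝔸.kComb ⬝ f) ⬝ g ⬝ a := by
        gcongr ?_ ⬝ _ ⬝ _; exact 𝔸.sComb_app_app_app_le _ _ _
    _ ≤ 𝔸.sComb ⬝ (𝔸.kComb ⬝ f) ⬝ g ⬝ a := by gcongr ?_ ⬝ _ ⬝ _ ⬝ _; exact 𝔸.kComb_app_app_le _ _
    _ ≤ 𝔸.kComb ⬝ f ⬝ a ⬝ (g ⬝ a) := 𝔸.sComb_app_app_app_le _ _ _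
    _ ≤ f ⬝ (g ⬝ a) := by gcongr ?_ ⬝ _; exact 𝔸.kComb_app_app_le _ _

theorem cComb_app_app_app_le (f a b : A) : 𝔸.cComb ⬝ f ⬝ a ⬝ b ≤ f ⬝ b ⬝ a :=
  calc 𝔸.cComb ⬝ f ⬝ a ⬝ b
        ≤ 𝔸.bComb ⬝ 𝔸.bComb ⬝ 𝔸.sComb ⬝ f ⬝ (𝔸.kComb ⬝ 𝔸.kComb ⬝ f) ⬝ a ⬝ b := by
        gcongr ?_ ⬝ _ ⬝ _; exact 𝔸.sComb_app_app_app_le _ _ _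
    _ ≤ 𝔸.bComb ⬝ (𝔸.sComb ⬝ f) ⬝ 𝔸.kComb ⬝ a ⬝ b := by
        gcongr ?_ ⬝ ?_ ⬝ _ ⬝ _
        · exact 𝔸.bComb_app_app_app_le _ _ _
        · exact 𝔸.kComb_app_app_le _ _
    _ ≤ 𝔸.sComb ⬝ f ⬝ (𝔸.kComb ⬝ a) ⬝ b := by gcongr ?_ ⬝ _; exact 𝔸.bComb_app_app_app_le _ _ _
    _ ≤ f ⬝ b ⬝ (𝔸.kComb ⬝ a ⬝ b) := 𝔸.sComb_app_app_app_le _ _ _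
    _ ≤ f ⬝ b ⬝ a := by gcongr _ ⬝ ?_; exact 𝔸.kComb_app_app_le _ _

theorem iInf_imp_app_mem_sep {c : A} (hc : c ∈ 𝔸.Sep) : (⨅ u, 𝔸.imp u (u ⬝ c)) ∈ 𝔸.Sep :=
  𝔸.iInf_imp_mem_sep (𝔸.app_mem_sep (𝔸.app_mem_sep 𝔸.cComb_mem_sep 𝔸.iComb_mem_sep) hc)
    fun u => (𝔸.cComb_app_app_app_le _ _ _).trans (by gcongr ?_ ⬝ _; exact 𝔸.iComb_app_le u)

theorem kbarComb_mem_sep : 𝔸.kbarComb ∈ 𝔸.Sep :=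
  𝔸.iInf_imp_mem_sep (𝔸.app_mem_sep 𝔸.kComb_mem_sep 𝔸.iComb_mem_sep) fun _ =>
    (𝔸.kComb_app_app_le _ _).trans ((𝔸.le_iInf_imp_iff).2 𝔸.iComb_app_le)

theorem p1Comb_mem_sep : 𝔸.p1Comb ∈ 𝔸.Sep := 𝔸.iInf_imp_app_mem_sep 𝔸.kComb_mem_sep

theorem p2Comb_mem_sep : 𝔸.p2Comb ∈ 𝔸.Sep := 𝔸.iInf_imp_app_mem_sep 𝔸.kbarComb_mem_sep

theorem pComb_mem_sep : 𝔸.pComb ∈ 𝔸.Sep := by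
  have hT : 𝔸.cComb ⬝ 𝔸.iComb ∈ 𝔸.Sep := 𝔸.app_mem_sep 𝔸.cComb_mem_sep 𝔸.iComb_mem_sep
  refine 𝔸.iInf_imp_mem_sep (𝔸.app_mem_sep (𝔸.app_mem_sep 𝔸.bComb_mem_sep 𝔸.cComb_mem_sep) hT)
    fun a => (𝔸.le_iInf_imp_iff).2 fun b => (𝔸.le_iInf_imp_iff).2 fun c => ?_
  calc 𝔸.bComb ⬝ 𝔸.cComb ⬝ (𝔸.cComb ⬝ 𝔸.iComb) ⬝ a ⬝ b ⬝ c
      ≤ 𝔸.cComb ⬝ (𝔸.cComb ⬝ 𝔸.iComb ⬝ a) ⬝ b ⬝ c := by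
        gcongr ?_ ⬝ _ ⬝ _; exact 𝔸.bComb_app_app_app_le _ _ _
    _ ≤ 𝔸.cComb ⬝ 𝔸.iComb ⬝ a ⬝ c ⬝ b := 𝔸.cComb_app_app_app_le _ _ _
    _ ≤ 𝔸.iComb ⬝ c ⬝ a ⬝ b := by gcongr ?_ ⬝ _; exact 𝔸.cComb_app_app_app_le _ _ _
    _ ≤ c ⬝ a ⬝ b := by gcongr ?_ ⬝ _ ⬝ _; exact 𝔸.iComb_app_le _

theorem itimes_le_imp {a b c x : A} (h : c ≤ 𝔸.imp a (𝔸.imp b x)) :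
    𝔸.itimes a b ≤ 𝔸.imp c x :=
  (iInf_le _ x).trans (𝔸.imp_anti h)

theorem iInf_imp_app_app_le_itimes (a b : A) :
    ⨅ c, 𝔸.imp c (c ⬝ a ⬝ b) ≤ 𝔸.itimes a b :=
  le_iInf fun x => iInf_le_of_le (𝔸.imp a (𝔸.imp b x)) <| 𝔸.imp_mono <| by
    rw [app_le_iff, app_le_iff]

theorem pComb_le_imp_imp_itimes (a b : A) : 𝔸.pComb ≤ 𝔸.imp a (𝔸.imp b (𝔸.itimes a b)) :=
  iInf_le_of_le a <| 𝔸.imp_mono <| iInf_le_of_le b <| 𝔸.imp_mono <|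
    𝔸.iInf_imp_app_app_le_itimes a b

theorem iInf_imp_app_le_itimes_imp {a b c x : A} (h : c ≤ 𝔸.imp a (𝔸.imp b x)) :
    ⨅ u, 𝔸.imp u (u ⬝ c) ≤ 𝔸.imp (𝔸.itimes a b) x :=
  iInf_le_of_le (𝔸.itimes a b) <| 𝔸.imp_mono <| (𝔸.app_le_iff).2 <| 𝔸.itimes_le_imp h

end ImplicativeAlgebra

/-- implicative conjunction satisfies introduction and elimination
up to the separator. -/
theorem itimes_intro_elim {A : Type u} [CompleteLattice A]
    (𝔸 : ImplicativeAlgebra A) :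
    ∃ p ∈ 𝔸.Sep, ∃ p1 ∈ 𝔸.Sep, ∃ p2 ∈ 𝔸.Sep,
      p ≤ (⨅ a : A, ⨅ b : A, 𝔸.imp a (𝔸.imp b (𝔸.itimes a b))) ∧
      p1 ≤ (⨅ a : A, ⨅ b : A, 𝔸.imp (𝔸.itimes a b) a) ∧
      p2 ≤ (⨅ a : A, ⨅ b : A, 𝔸.imp (𝔸.itimes a b) b) :=
  ⟨𝔸.pComb, 𝔸.pComb_mem_sep, 𝔸.p1Comb, 𝔸.p1Comb_mem_sep, 𝔸.p2Comb, 𝔸.p2Comb_mem_sep,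
    le_iInf₂ 𝔸.pComb_le_imp_imp_itimes,
    le_iInf₂ fun a b => 𝔸.iInf_imp_app_le_itimes_imp (𝔸.kComb_le_imp_imp a b),
    le_iInf₂ fun a b => 𝔸.iInf_imp_app_le_itimes_imp (𝔸.kbarComb_le_imp_imp a b)⟩
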